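/- Let h > 0 be real and θ₁, θ₂ ∈ ℝ. Over ℂ, let A be the 5×5 matrix (1/h²)·[[4, 0, −1, 0, 0], [0, 4, −1, 0, 0], [−1, −1, 4, −1, −1], [0, 0, −1, 4, 0], [0, 0, −1, 0, 4]], let Φ = diag(e^{−iθ₂}, e^{−iθ₁}, 1, e^{iθ₁}, e^{iθ₂}), let W = (1/5)·I₅, and let V be the 5×1 column vector of ones. Then A is invertible with A⁻¹ = h²·[[13/48, 1/48, 1/12, 1/48, 1/48], [1/48, 13/48, 1/12, 1/48, 1/48], [1/12, 1/12, 1/3, 1/12, 1/12], [1/48, 1/48, 1/12, 13/48, 1/48], [1/48, 1/48, 1/12, 1/48, 13/48]], and the 1×1 matrix Vᵀ W Φ* A⁻¹ Φ V (where Φ* is the conjugate transpose of Φ) has its unique entry equal to (h²/120)((cos θ₁ + cos θ₂ + 4)² + (cos θ₁ + cos θ₂)² + 16). -/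

import Mathlib

/-! The patch matrix is `h⁻²` times an integer matrix whose inverse is checked by multiplication.
With `V` the vector of ones and `Φ = diagonal φ`, the entry of `Vᵀ W Φᴴ A⁻¹ Φ V` is `1/5` times the
Hermitian form `φᴴ A⁻¹ φ`. The phases have modulus one, so `conj φ = φ⁻¹` entrywise and the form is
a Laurent polynomial in `x = e^{iθ₁}`, `y = e^{iθ₂}` that depends only on `x + x⁻¹ = 2 cos θ₁` and
`y + y⁻¹ = 2 cos θ₂`. -/

open Matrix Complex

noncomputable def A19 (h : ℝ) : Matrix (Fin 5) (Fin 5) ℂ :=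
  (1 / (h ^ 2 : ℂ)) •
    !![4, 0, -1, 0, 0;
       0, 4, -1, 0, 0;
       -1, -1, 4, -1, -1;
       0, 0, -1, 4, 0;
       0, 0, -1, 0, 4]

noncomputable def Phi19 (θ₁ θ₂ : ℝ) : Matrix (Fin 5) (Fin 5) ℂ :=
  diagonal ![exp (-(I * θ₂)), exp (-(I * θ₁)), 1, exp (I * θ₁), exp (I * θ₂)]

noncomputable def W19 : Matrix (Fin 5) (Fin 5) ℂ := (1 / 5 : ℂ) • 1

def V19 : Matrix (Fin 5) (Fin 1) ℂ := fun _ _ => 1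

open scoped ComplexConjugate

theorem transpose_mul_smul_one_mul_diagonal_conjTranspose_mul_mul_diagonal_mul_apply
    {n ι R : Type*} [Fintype n] [DecidableEq n] [CommRing R] [StarRing R]
    {V : Matrix n ι R} (hV : ∀ a b, V a b = 1) (c : R) (d : n → R) (M : Matrix n n R) (i j : ι) :
    (Vᵀ * (c • (1 : Matrix n n R)) * (diagonal d)ᴴ * M * diagonal d * V) i j =
      c * (star d ⬝ᵥ M *ᵥ d) := by
  have sum_entries (X : Matrix n n R) : (Vᵀ * X * V) i j = ∑ a, ∑ b, X a b := by
    simp [Matrix.mul_apply, hV, Finset.sum_comm (γ := n)]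
  simp only [Matrix.mul_smul, Matrix.mul_one, Matrix.smul_mul, Matrix.smul_apply, smul_eq_mul]
  rw [show Vᵀ * (diagonal d)ᴴ * M * diagonal d * V = Vᵀ * ((diagonal d)ᴴ * M * diagonal d) * V by
    simp only [Matrix.mul_assoc], sum_entries, diagonal_conjTranspose]
  simp [diagonal_mul, mul_diagonal, dotProduct, mulVec, Finset.mul_sum, mul_assoc]

def fivePointPatch : Matrix (Fin 5) (Fin 5) ℂ :=
  !![4, 0, -1, 0, 0;
     0, 4, -1, 0, 0;
     -1, -1, 4, -1, -1;
     0, 0, -1, 4, 0;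
     0, 0, -1, 0, 4]

noncomputable def fivePointPatchInv : Matrix (Fin 5) (Fin 5) ℂ :=
  !![13/48, 1/48, 1/12, 1/48, 1/48;
     1/48, 13/48, 1/12, 1/48, 1/48;
     1/12, 1/12, 1/3, 1/12, 1/12;
     1/48, 1/48, 1/12, 13/48, 1/48;
     1/48, 1/48, 1/12, 1/48, 13/48]

theorem fivePointPatch_mul_fivePointPatchInv : fivePointPatch * fivePointPatchInv = 1 := by
  ext i j
  fin_cases i <;> fin_cases j <;>
    simp [fivePointPatch, fivePointPatchInv, Matrix.mul_apply, Fin.sum_univ_five] <;> norm_num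

theorem A19_mul_smul_fivePointPatchInv {h : ℝ} (hh : h ≠ 0) :
    A19 h * ((h ^ 2 : ℂ) • fivePointPatchInv) = 1 := by
  have hh2 : (h : ℂ) ^ 2 ≠ 0 := by exact_mod_cast pow_ne_zero 2 hh
  rw [A19, smul_mul_smul_comm, ← fivePointPatch, fivePointPatch_mul_fivePointPatchInv, one_div,
    inv_mul_cancel₀ hh2, one_smul]

theorem star_dotProduct_fivePointPatchInv_mulVec {x y : ℂ} (hx : ‖x‖ = 1) (hy : ‖y‖ = 1) :
    star ![y⁻¹, x⁻¹, 1, x, y] ⬝ᵥ fivePointPatchInv *ᵥ ![y⁻¹, x⁻¹, 1, x, y] =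
      (((x + x⁻¹) + (y + y⁻¹) + 4) ^ 2 + 48) / 48 := by
  have hx0 : x ≠ 0 := norm_ne_zero_iff.mp (by simp [hx])
  have hy0 : y ≠ 0 := norm_ne_zero_iff.mp (by simp [hy])
  have conj_x : conj x = x⁻¹ := (inv_eq_conj hx).symm
  have conj_y : conj y = y⁻¹ := (inv_eq_conj hy).symm
  simp only [dotProduct, mulVec, fivePointPatchInv, Fin.sum_univ_five, Pi.star_apply,
    RCLike.star_def, one_div, of_apply, cons_val', cons_val_fin_one, cons_val_zero, cons_val_one,
    cons_val, mul_one, one_mul, map_inv₀, map_one, inv_inv, conj_x, conj_y]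
  field_simp
  ring

theorem exp_I_mul_ofReal_add_inv (θ : ℝ) : exp (I * θ) + (exp (I * θ))⁻¹ = 2 * Real.cos θ := by
  rw [ofReal_cos, two_cos, ← exp_neg, neg_mul, mul_comm]

theorem stmt_19 (h θ₁ θ₂ : ℝ) (hh : 0 < h) :
    IsUnit (A19 h) ∧
    (A19 h)⁻¹ = (h ^ 2 : ℂ) •
      !![13/48, 1/48, 1/12, 1/48, 1/48;
         1/48, 13/48, 1/12, 1/48, 1/48;
         1/12, 1/12, 1/3, 1/12, 1/12;
         1/48, 1/48, 1/12, 13/48, 1/48;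
         1/48, 1/48, 1/12, 1/48, 13/48] ∧
    (V19ᵀ * W19 * (Phi19 θ₁ θ₂)ᴴ * (A19 h)⁻¹ * Phi19 θ₁ θ₂ * V19) 0 0 =
      ((h ^ 2 : ℂ) / 120) * (((Real.cos θ₁ : ℂ) + (Real.cos θ₂ : ℂ) + 4) ^ 2 +
        ((Real.cos θ₁ : ℂ) + (Real.cos θ₂ : ℂ)) ^ 2 + 16) := by
  have hmul := A19_mul_smul_fivePointPatchInv hh.ne'
  have hinv : (A19 h)⁻¹ = (h ^ 2 : ℂ) • fivePointPatchInv := inv_eq_right_inv hmul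
  refine ⟨.of_mul_eq_one _ hmul, hinv, ?_⟩
  rw [hinv, W19, Phi19,
    transpose_mul_smul_one_mul_diagonal_conjTranspose_mul_mul_diagonal_mul_apply (V := V19)
      (fun _ _ => rfl),
    smul_mulVec, dotProduct_smul, exp_neg, exp_neg,
    star_dotProduct_fivePointPatchInv_mulVec (norm_exp_I_mul_ofReal θ₁) (norm_exp_I_mul_ofReal θ₂),
    exp_I_mul_ofReal_add_inv, exp_I_mul_ofReal_add_inv]
  ring
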